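/- arXiv:2009.11991 — 2 statements merged into one kernel-verified Lean document; each statement's English description precedes it below -/
import Mathlib

section
/- Let A be an n×n real matrix and β ∈ ℝ. If S is a symmetric positive semidefinite n×n matrix satisfying the fixed-point equation S = A(I_n + β² S)Aᵀ + Aᵀ(I_n + β² S)A, then the column space of S equals the column space of the compound matrix [A Aᵀ], and rank(S) = rank([A Aᵀ]). -/
/-!
With `M = 1 + β² S`, positive definite because `S` is positive semidefinite, the fixed-point
equation reads `S = C D Cᵀ` for `C = [A Aᵀ]` and `D = diag(M, M)`. For positive definite `D`,
`xᵀ C D Cᵀ x = 0` forces `Cᵀ x = 0`, so `C D Cᵀ` and `Cᵀ` have the same kernel and hence the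
same rank as `C`; since the column space of `C D Cᵀ` lies in that of `C`, the two coincide.
-/

namespace Matrix

variable {m n R : Type*} [Fintype m] [Fintype n] [Field R] [PartialOrder R] [StarRing R]

theorem PosDef.fromBlocks_zero₁₂_zero₂₁ [StarOrderedRing R] {A : Matrix m m R}
    {B : Matrix n n R} (hA : A.PosDef) (hB : B.PosDef) : (fromBlocks A 0 0 B).PosDef := by
  refine PosDef.of_dotProduct_mulVec_pos
    (hA.isHermitian.fromBlocks conjTranspose_zero hB.isHermitian) fun x hx => ?_
  obtain ⟨x₁, x₂, rfl⟩ : ∃ x₁ x₂, x = Sum.elim x₁ x₂ := ⟨_, _, (Sum.elim_comp_inl_inr x).symm⟩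
  simp only [Function.star_sumElim, fromBlocks_mulVec, Sum.elim_comp_inl, Sum.elim_comp_inr,
    zero_mulVec, add_zero, zero_add, sumElim_dotProduct_sumElim]
  have h₁ := hA.posSemidef.dotProduct_mulVec_nonneg x₁
  have h₂ := hB.posSemidef.dotProduct_mulVec_nonneg x₂
  rcases eq_or_ne x₁ 0 with rfl | hx₁
  · have hx₂ : x₂ ≠ 0 := by rintro rfl; exact hx Sum.elim_zero_zero
    exact add_pos_of_nonneg_of_pos h₁ (hB.dotProduct_mulVec_pos hx₂)
  · exact add_pos_of_pos_of_nonneg (hA.dotProduct_mulVec_pos hx₁) h₂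

theorem ker_mulVecLin_mul_mul_conjTranspose {D : Matrix n n R} (hD : D.PosDef)
    (C : Matrix m n R) :
    LinearMap.ker (C * D * Cᴴ).mulVecLin = LinearMap.ker Cᴴ.mulVecLin := by
  ext x
  simp only [LinearMap.mem_ker, mulVecLin_apply]
  refine ⟨fun hx => ?_, fun hx => by rw [← mulVec_mulVec, hx, mulVec_zero]⟩
  have hquad : star (Cᴴ *ᵥ x) ⬝ᵥ (D *ᵥ (Cᴴ *ᵥ x)) = star x ⬝ᵥ ((C * D * Cᴴ) *ᵥ x) := by
    simp only [star_mulVec, conjTranspose_conjTranspose, dotProduct_mulVec, vecMul_vecMul]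
  by_contra hne
  have hpos := hD.dotProduct_mulVec_pos hne
  rw [hquad, hx, dotProduct_zero] at hpos
  exact lt_irrefl 0 hpos

theorem rank_mul_mul_conjTranspose [StarOrderedRing R] {D : Matrix n n R} (hD : D.PosDef)
    (C : Matrix m n R) : (C * D * Cᴴ).rank = C.rank := by
  have h₁ := LinearMap.finrank_range_add_finrank_ker (C * D * Cᴴ).mulVecLin
  have h₂ := LinearMap.finrank_range_add_finrank_ker Cᴴ.mulVecLin
  rw [ker_mulVecLin_mul_mul_conjTranspose hD] at h₁
  rw [← rank_conjTranspose C]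
  exact Nat.add_right_cancel (h₁.trans h₂.symm)

theorem range_mulVecLin_mul_mul_conjTranspose [StarOrderedRing R] {D : Matrix n n R}
    (hD : D.PosDef) (C : Matrix m n R) :
    LinearMap.range (C * D * Cᴴ).mulVecLin = LinearMap.range C.mulVecLin := by
  refine Submodule.eq_of_le_of_finrank_eq ?_ (rank_mul_mul_conjTranspose hD C)
  rw [Matrix.mul_assoc, mulVecLin_mul]
  exact LinearMap.range_comp_le_range _ _

end Matrix

open Matrix

/-- If `S` is a symmetric positive semidefinite matrix satisfying the
fixed-point equation `S = A(I + β² S)Aᵀ + Aᵀ(I + β² S)A`, then the column space of `S`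
equals the column space of the compound matrix `[A Aᵀ]`, and `rank S = rank [A Aᵀ]`. -/
theorem fixedPoint_colSpace_eq_compound (n : ℕ) (A : Matrix (Fin n) (Fin n) ℝ) (β : ℝ)
    (S : Matrix (Fin n) (Fin n) ℝ) (hS : S.PosSemidef)
    (hfix : S = A * (1 + β ^ 2 • S) * Aᵀ + Aᵀ * (1 + β ^ 2 • S) * A) :
    LinearMap.range S.mulVecLin
        = LinearMap.range (Matrix.fromCols A Aᵀ).mulVecLin ∧
      S.rank = (Matrix.fromCols A Aᵀ).rank := by
  set M := 1 + β ^ 2 • S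
  have hM : M.PosDef := PosDef.one.add_posSemidef (hS.smul (sq_nonneg β))
  have hD := hM.fromBlocks_zero₁₂_zero₂₁ hM
  have hS_eq : S = fromCols A Aᵀ * fromBlocks M 0 0 M * (fromCols A Aᵀ)ᴴ := by
    rw [conjTranspose_eq_transpose_of_trivial, transpose_fromCols, transpose_transpose,
      fromCols_mul_fromBlocks, fromCols_mul_fromRows]
    simpa only [Matrix.mul_zero, add_zero, zero_add] using hfix
  rw [hS_eq]
  exact ⟨range_mulVecLin_mul_mul_conjTranspose hD _, rank_mul_mul_conjTranspose hD _⟩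
end

section
/- Let A = (PZ)B(PZ)ᵀ be an ideal adjacency matrix with P an n×n permutation matrix, B a q×q real matrix, Z = Diag{z_1, …, z_q} ∈ ℝ^{n×q} block diagonal with z_i the all-ones vector of length n_i ≥ 1, N := ZᵀZ, β ∈ ℝ, S_k the similarity iteration for A, and Ŝ_k := N⁻¹(PZ)ᵀ S_k (PZ) N⁻¹. Then for every k ≥ 1, the column space of Ŝ_k equals the column space of the q×2q compound matrix [B Bᵀ], the column space of S_k equals the image of the column space of [B Bᵀ] under PZ, and rank(S_k) = rank(Ŝ_k) = rank([B Bᵀ]) ≤ q. -/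
/-!
Put `W = PZ`. Then `WᵀW = N` is positive definite, so `W` is injective and `Wᵀ` is
surjective. By induction `S_k = W (B D Bᵀ + Bᵀ D B) Wᵀ` for a positive definite `D`
(`D = N` for `k = 1`, and `N + β² N Ŝ_k N` in the step to `k + 1`), which gives
`Ŝ_k = B D Bᵀ + Bᵀ D B`. This matrix equals `F · diag(D, D) · Fᵀ` with `F = [B Bᵀ]`, and writing
`diag(D, D) = R Rᵀ` with `R` invertible shows that its column space is that of `F`; the claims
about `S_k` follow because `W` is injective and `Wᵀ` is surjective.
-/

open Matrix

theorem Matrix.PosDef.fromBlocks_zero {R p r : Type*} [CommRing R] [PartialOrder R] [StarRing R]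
    [IsOrderedRing R] [Fintype p] [Fintype r]
    {D : Matrix p p R} {E : Matrix r r R} (hD : D.PosDef) (hE : E.PosDef) :
    (fromBlocks D 0 0 E).PosDef := by
  refine PosDef.of_dotProduct_mulVec_pos (hD.isHermitian.fromBlocks (by simp) hE.isHermitian)
    fun x hx => ?_
  obtain ⟨u, v, rfl⟩ : ∃ u v, x = Sum.elim u v := ⟨_, _, (Sum.elim_comp_inl_inr x).symm⟩
  simp only [fromBlocks_mulVec, zero_mulVec, add_zero, zero_add, Sum.elim_comp_inl,
    Sum.elim_comp_inr, Function.star_sumElim, sumElim_dotProduct_sumElim]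
  by_cases hu : u = 0
  · have hv : v ≠ 0 := fun hv => hx (by rw [hu, hv, Sum.elim_zero_zero])
    simpa [hu] using hE.dotProduct_mulVec_pos hv
  · exact add_pos_of_pos_of_nonneg (hD.dotProduct_mulVec_pos hu)
      (hE.posSemidef.dotProduct_mulVec_nonneg v)

section Range

variable {R l m n : Type*} [Fintype m] [Fintype n]

theorem Matrix.range_mulVecLin_mul_of_surjective [CommSemiring R] (M : Matrix l m R)
    {E : Matrix m n R} (hE : Function.Surjective E.mulVecLin) :
    LinearMap.range (M * E).mulVecLin = LinearMap.range M.mulVecLin := by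
  rw [mulVecLin_mul]
  exact LinearMap.range_comp_of_range_eq_top _ (LinearMap.range_eq_top.2 hE)

theorem Matrix.range_mulVecLin_mul_transpose_self [Fintype l] (M : Matrix l m ℝ) :
    LinearMap.range (M * Mᵀ).mulVecLin = LinearMap.range M.mulVecLin := by
  refine Submodule.eq_of_le_of_finrank_le ?_ (rank_self_mul_transpose M).ge
  rw [mulVecLin_mul]
  exact LinearMap.range_comp_le_range _ _

open scoped MatrixOrder in
theorem Matrix.range_mulVecLin_mul_posDef_mul_transpose [Fintype l] [DecidableEq m]
    (F : Matrix l m ℝ) {D : Matrix m m ℝ} (hD : D.PosDef) :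
    LinearMap.range (F * D * Fᵀ).mulVecLin = LinearMap.range F.mulVecLin := by
  set S := CFC.sqrt D
  have hSS : S * S = D := CFC.sqrt_mul_sqrt_self D hD.posSemidef.nonneg
  have hS : Sᵀ = S := by
    simpa [IsHermitian] using (CFC.sqrt_nonneg D).posSemidef.isHermitian
  have hS_surj : Function.Surjective S.mulVecLin := by
    have : IsUnit S := (IsUnit.mul_iff.mp (hSS ▸ hD.isUnit)).1
    exact (mulVec_surjective_iff_isUnit.mpr this)
  calc LinearMap.range (F * D * Fᵀ).mulVecLin
      = LinearMap.range ((F * S) * (F * S)ᵀ).mulVecLin := by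
        rw [transpose_mul, hS, ← hSS]; simp only [Matrix.mul_assoc]
    _ = LinearMap.range F.mulVecLin := by
        rw [range_mulVecLin_mul_transpose_self, range_mulVecLin_mul_of_surjective _ hS_surj]

theorem Matrix.range_mulVecLin_mul_posDef_mul_transpose_add [DecidableEq m]
    (B : Matrix m m ℝ) {D : Matrix m m ℝ} (hD : D.PosDef) :
    LinearMap.range (B * D * Bᵀ + Bᵀ * D * B).mulVecLin
      = LinearMap.range (fromCols B Bᵀ).mulVecLin := by
  have hC : B * D * Bᵀ + Bᵀ * D * B
      = fromCols B Bᵀ * fromBlocks D 0 0 D * (fromCols B Bᵀ)ᵀ := by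
    simp [fromCols_mul_fromBlocks, transpose_fromCols, fromCols_mul_fromRows]
  rw [hC, range_mulVecLin_mul_posDef_mul_transpose _ (hD.fromBlocks_zero hD)]

end Range

section FullColumnRank

variable {n p : Type*} [Fintype n] [Fintype p] {W : Matrix n p ℝ}

theorem Matrix.posDef_transpose_mul_self (hW : Function.Injective W.mulVec) :
    (Wᵀ * W).PosDef := by
  simpa using PosDef.conjTranspose_mul_self W hW

variable [DecidableEq p]

theorem Matrix.surjective_transpose_mulVecLin (hW : Function.Injective W.mulVec) :
    Function.Surjective Wᵀ.mulVecLin := by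
  have hG := (isUnit_iff_isUnit_det _).mp (posDef_transpose_mul_self hW).isUnit
  intro v
  refine ⟨W *ᵥ ((Wᵀ * W)⁻¹ *ᵥ v), ?_⟩
  rw [mulVecLin_apply, mulVec_mulVec, mulVec_mulVec, mul_nonsing_inv _ hG, one_mulVec]

theorem Matrix.inv_mul_transpose_mul_sandwich (hW : Function.Injective W.mulVec)
    (C : Matrix p p ℝ) :
    (Wᵀ * W)⁻¹ * Wᵀ * (W * C * Wᵀ) * W * (Wᵀ * W)⁻¹ = C := by
  have hG := (isUnit_iff_isUnit_det _).mp (posDef_transpose_mul_self hW).isUnit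
  calc (Wᵀ * W)⁻¹ * Wᵀ * (W * C * Wᵀ) * W * (Wᵀ * W)⁻¹
      = ((Wᵀ * W)⁻¹ * (Wᵀ * W)) * C * ((Wᵀ * W) * (Wᵀ * W)⁻¹) := by
        simp only [Matrix.mul_assoc]
    _ = C := by rw [nonsing_inv_mul _ hG, mul_nonsing_inv _ hG, Matrix.one_mul, Matrix.mul_one]

theorem Matrix.range_mulVecLin_sandwich (hW : Function.Injective W.mulVec) (C : Matrix p p ℝ) :
    LinearMap.range (W * C * Wᵀ).mulVecLin = (LinearMap.range C.mulVecLin).map W.mulVecLin := by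
  rw [Matrix.mul_assoc, mulVecLin_mul, LinearMap.range_comp,
    range_mulVecLin_mul_of_surjective _ (surjective_transpose_mulVecLin hW)]

theorem Matrix.rank_sandwich (hW : Function.Injective W.mulVec) (C : Matrix p p ℝ) :
    (W * C * Wᵀ).rank = C.rank := by
  rw [rank, rank, range_mulVecLin_sandwich hW]
  exact (Submodule.equivMapOfInjective W.mulVecLin hW _).finrank_eq.symm

end FullColumnRank

section SimilarityIteration

variable {n p : Type*} [Fintype n] [Fintype p]

theorem Matrix.sandwich_mul_mul_transpose_add {R : Type*} [CommRing R] (W : Matrix n p R)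
    (B : Matrix p p R) (E : Matrix n n R) :
    (W * B * Wᵀ) * E * (W * B * Wᵀ)ᵀ + (W * B * Wᵀ)ᵀ * E * (W * B * Wᵀ)
      = W * (B * (Wᵀ * E * W) * Bᵀ + Bᵀ * (Wᵀ * E * W) * B) * Wᵀ := by
  simp only [transpose_mul, transpose_transpose, Matrix.mul_add, Matrix.add_mul,
    Matrix.mul_assoc]

theorem Matrix.PosSemidef.mul_mul_transpose_add {D : Matrix p p ℝ} (hD : D.PosSemidef)
    (B : Matrix p p ℝ) : (B * D * Bᵀ + Bᵀ * D * B).PosSemidef := by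
  simpa using (hD.mul_mul_conjTranspose_same B).add (hD.mul_mul_conjTranspose_same Bᵀ)

theorem Matrix.exists_posDef_similarity_eq_sandwich [DecidableEq n] {W : Matrix n p ℝ}
    (hW : Function.Injective W.mulVec) (B : Matrix p p ℝ) (β : ℝ) {S : ℕ → Matrix n n ℝ}
    (hS1 : S 1 = (W * B * Wᵀ) * (W * B * Wᵀ)ᵀ + (W * B * Wᵀ)ᵀ * (W * B * Wᵀ))
    (hSk : ∀ k, 1 ≤ k → S (k + 1) = (W * B * Wᵀ) * (1 + β ^ 2 • S k) * (W * B * Wᵀ)ᵀ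
      + (W * B * Wᵀ)ᵀ * (1 + β ^ 2 • S k) * (W * B * Wᵀ)) :
    ∀ k, 1 ≤ k → ∃ D : Matrix p p ℝ, D.PosDef ∧
      S k = W * (B * D * Bᵀ + Bᵀ * D * B) * Wᵀ := by
  have hG := posDef_transpose_mul_self hW
  intro k hk
  induction k, hk using Nat.le_induction with
  | base =>
    refine ⟨Wᵀ * W, hG, ?_⟩
    have h := sandwich_mul_mul_transpose_add W B 1
    rw [Matrix.mul_one, Matrix.mul_one, Matrix.mul_one] at h
    rw [hS1, h]
  | succ k hk ih =>
    obtain ⟨D, hD, hSD⟩ := ih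
    set C := B * D * Bᵀ + Bᵀ * D * B
    have hGCG : ((Wᵀ * W) * C * (Wᵀ * W)).PosSemidef := by
      simpa using (hD.posSemidef.mul_mul_transpose_add B).conjTranspose_mul_mul_same (Wᵀ * W)
    refine ⟨Wᵀ * W + β ^ 2 • ((Wᵀ * W) * C * (Wᵀ * W)),
      hG.add_posSemidef (hGCG.smul (sq_nonneg β)), ?_⟩
    rw [hSk k hk, sandwich_mul_mul_transpose_add, hSD]
    congr 4 <;> simp only [Matrix.mul_add, Matrix.add_mul, Matrix.mul_one, Matrix.mul_smul,
      Matrix.smul_mul, Matrix.mul_assoc]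

end SimilarityIteration

theorem Matrix.transpose_permMatrix_mul_self {α R : Type*} [DecidableEq α] [Fintype α]
    [NonAssocSemiring R] (σ : Equiv.Perm α) :
    (σ.permMatrix R)ᵀ * σ.permMatrix R = 1 := by
  rw [transpose_permMatrix, ← permMatrix_mul, mul_inv_cancel, permMatrix_one]

theorem Matrix.mulVec_injective_of_eq_ite_fst {R ι : Type*} [Semiring R] [Fintype ι]
    [DecidableEq ι] {κ : ι → Type*} [∀ i, Fintype (κ i)] (hκ : ∀ i, Nonempty (κ i))
    {Z : Matrix ((i : ι) × κ i) ι R} (hZ : ∀ a j, Z a j = if a.1 = j then 1 else 0) :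
    Function.Injective Z.mulVec := by
  have hZx : ∀ x a, (Z *ᵥ x) a = x a.1 := fun x a => by
    simp [mulVec, dotProduct, hZ]
  intro x y hxy
  funext i
  obtain ⟨b⟩ := hκ i
  simpa [hZx] using congrFun hxy ⟨i, b⟩

/-- For an ideal adjacency matrix `A = (PZ)B(PZ)ᵀ` and the compressed
similarity matrices `Ŝ_k := N⁻¹(PZ)ᵀ S_k (PZ) N⁻¹` (`N := ZᵀZ`), for every `k ≥ 1` the
column space of `Ŝ_k` equals that of the compound matrix `[B Bᵀ]`, the column space of
`S_k` is the image under `PZ` of the column space of `[B Bᵀ]`, and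
`rank S_k = rank Ŝ_k = rank [B Bᵀ] ≤ q`. -/
theorem ideal_colSpace_Shat_eq_compound (q : ℕ) (m : Fin q → ℕ) (hm : ∀ i, 1 ≤ m i)
    (P : Matrix ((i : Fin q) × Fin (m i)) ((i : Fin q) × Fin (m i)) ℝ)
    (hP : ∃ σ : Equiv.Perm ((i : Fin q) × Fin (m i)), P = σ.permMatrix ℝ)
    (Z : Matrix ((i : Fin q) × Fin (m i)) (Fin q) ℝ)
    (hZ : ∀ i j, Z i j = if i.1 = j then 1 else 0)
    (B : Matrix (Fin q) (Fin q) ℝ)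
    (A : Matrix ((i : Fin q) × Fin (m i)) ((i : Fin q) × Fin (m i)) ℝ)
    (hA : A = (P * Z) * B * (P * Z)ᵀ)
    (β : ℝ)
    (S : ℕ → Matrix ((i : Fin q) × Fin (m i)) ((i : Fin q) × Fin (m i)) ℝ)
    (hS1 : S 1 = A * Aᵀ + Aᵀ * A)
    (hSk : ∀ k, 1 ≤ k →
      S (k + 1) = A * (1 + β ^ 2 • S k) * Aᵀ + Aᵀ * (1 + β ^ 2 • S k) * A)
    (N : Matrix (Fin q) (Fin q) ℝ) (hN : N = Zᵀ * Z)
    (Shat : ℕ → Matrix (Fin q) (Fin q) ℝ)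
    (hShat : ∀ k, Shat k = N⁻¹ * (P * Z)ᵀ * S k * (P * Z) * N⁻¹) :
    ∀ k, 1 ≤ k →
      LinearMap.range (Shat k).mulVecLin
          = LinearMap.range (Matrix.fromCols B Bᵀ).mulVecLin ∧
      LinearMap.range (S k).mulVecLin
          = Submodule.map (P * Z).mulVecLin
              (LinearMap.range (Matrix.fromCols B Bᵀ).mulVecLin) ∧
      (S k).rank = (Shat k).rank ∧
      (Shat k).rank = (Matrix.fromCols B Bᵀ).rank ∧
      (Matrix.fromCols B Bᵀ).rank ≤ q := by
  intro k hk
  obtain ⟨σ, rfl⟩ := hP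
  have hZ_inj := mulVec_injective_of_eq_ite_fst (fun i => ⟨⟨0, hm i⟩⟩) hZ
  have hW : Function.Injective (σ.permMatrix ℝ * Z).mulVec := fun x y hxy => hZ_inj <| by
    simpa [← mulVec_mulVec, permMatrix_mulVec, σ.surjective.injective_comp_right.eq_iff]
      using hxy
  have hNW : N = (σ.permMatrix ℝ * Z)ᵀ * (σ.permMatrix ℝ * Z) := by
    rw [hN, transpose_mul, Matrix.mul_assoc, ← Matrix.mul_assoc _ _ Z,
      transpose_permMatrix_mul_self, Matrix.one_mul]
  subst hA hNW
  obtain ⟨D, hD, hSD⟩ := exists_posDef_similarity_eq_sandwich hW B β hS1 hSk k hk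
  have hShatD : Shat k = B * D * Bᵀ + Bᵀ * D * B := by
    rw [hShat, hSD, inv_mul_transpose_mul_sandwich hW]
  have hC := range_mulVecLin_mul_posDef_mul_transpose_add B hD
  refine ⟨by rw [hShatD, hC], by rw [hSD, range_mulVecLin_sandwich hW, hC],
    by rw [hSD, hShatD, rank_sandwich hW], by rw [hShatD, rank, hC, rank],
    (rank_le_card_height _).trans (Fintype.card_fin q).le⟩
end
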